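/- Let S and r be parameters with 0 < S < 4r, and let u₀ be the standing wave. Set c(x) = (2S²/r)(2u₀(x)−1)·f(u₀(x)) + S·f'(u₀(x)). Then for every twice continuously differentiable function h : ℝ → ℝ and every x ∈ ℝ, (Lh)(x) = e^{−(2S/r)(u₀(x)² − u₀(x))} · [ k''(x) + c(x)·k(x) ], where k(x) := h(x)·e^{(2S/r)(u₀(x)² − u₀(x))}. -/

import Mathlib

open Real Filter Topology

noncomputable def fpoly (u : ℝ) : ℝ := u * (2 * u - 1) * (1 - u)

noncomputable def Lop (S r : ℝ) (u₀ h : ℝ → ℝ) : ℝ → ℝ := fun x =>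
  deriv (deriv h) x + (4 * S / r) * deriv u₀ x * (2 * u₀ x - 1) * deriv h x
    + S * (deriv fpoly (u₀ x) + (4 / r) * (deriv u₀ x) ^ 2) * h x

/-!
With `φ = (2S/r)(u₀² - u₀)`, the product rule gives
`e^{-φ} (h e^φ)'' = h'' + 2φ'h' + (φ'' + φ'²) h`, and `2φ' = (4S/r)(2u₀ - 1)u₀'` is the drift
coefficient of `L`. Eliminating `u₀''` with the standing-wave equation,
`φ'' + φ'² = (4S/r)u₀'² - (2S²/r)(2u₀ - 1) f(u₀)`, so adding `c` yields exactly the zeroth-order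
coefficient `S (f'(u₀) + (4/r)u₀'²)` of `L`.
-/

section MulExp

variable {h φ : ℝ → ℝ} {x : ℝ}

theorem hasDerivAt_mul_exp {h' φ' : ℝ} (hh : HasDerivAt h h' x) (hφ : HasDerivAt φ φ' x) :
    HasDerivAt (fun y => h y * exp (φ y)) ((h' + φ' * h x) * exp (φ x)) x :=
  (hh.mul hφ.exp).congr_deriv (by ring)

theorem deriv_mul_exp (hh : Differentiable ℝ h) (hφ : Differentiable ℝ φ) :
    deriv (fun y => h y * exp (φ y)) = fun y => (deriv h y + deriv φ y * h y) * exp (φ y) :=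
  funext fun y => (hasDerivAt_mul_exp (hh y).hasDerivAt (hφ y).hasDerivAt).deriv

theorem deriv_deriv_mul_exp (hh : Differentiable ℝ h) (hφ : Differentiable ℝ φ)
    (hh' : DifferentiableAt ℝ (deriv h) x) (hφ' : DifferentiableAt ℝ (deriv φ) x) :
    deriv (deriv fun y => h y * exp (φ y)) x =
      (deriv (deriv h) x + 2 * deriv φ x * deriv h x
        + (deriv (deriv φ) x + deriv φ x ^ 2) * h x) * exp (φ x) := by
  have hg : HasDerivAt (fun y => deriv h y + deriv φ y * h y)
      (deriv (deriv h) x + (deriv (deriv φ) x * h x + deriv φ x * deriv h x)) x :=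
    hh'.hasDerivAt.add (hφ'.hasDerivAt.mul (hh x).hasDerivAt)
  rw [deriv_mul_exp hh hφ, (hasDerivAt_mul_exp hg (hφ x).hasDerivAt).deriv]
  ring

end MulExp

section QuadraticPhase

variable {u : ℝ → ℝ} {x : ℝ}

theorem hasDerivAt_mul_sq_sub {u' : ℝ} (a : ℝ) (hu : HasDerivAt u u' x) :
    HasDerivAt (fun y => a * (u y ^ 2 - u y)) (a * (2 * u x - 1) * u') x :=
  (((hu.pow 2).sub hu).const_mul a).congr_deriv (by ring)

theorem deriv_mul_sq_sub (a : ℝ) (hu : Differentiable ℝ u) :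
    deriv (fun y => a * (u y ^ 2 - u y)) = fun y => a * (2 * u y - 1) * deriv u y :=
  funext fun y => (hasDerivAt_mul_sq_sub a (hu y).hasDerivAt).deriv

theorem deriv_deriv_mul_sq_sub (a : ℝ) (hu : Differentiable ℝ u)
    (hu' : DifferentiableAt ℝ (deriv u) x) :
    deriv (deriv fun y => a * (u y ^ 2 - u y)) x =
      a * (2 * deriv u x ^ 2 + (2 * u x - 1) * deriv (deriv u) x) := by
  have hw : HasDerivAt (fun y => a * (2 * u y - 1) * deriv u y)
      (a * (2 * deriv u x) * deriv u x + a * (2 * u x - 1) * deriv (deriv u) x) x :=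
    ((((hu x).hasDerivAt.const_mul 2).sub_const 1).const_mul a).mul hu'.hasDerivAt
  rw [deriv_mul_sq_sub a hu, hw.deriv]
  ring

end QuadraticPhase

theorem conjugation_identity (S r : ℝ)
    (u₀ : ℝ → ℝ) (hu : ContDiff ℝ 2 u₀)
    (hode : ∀ x : ℝ, deriv (deriv u₀) x + S * fpoly (u₀ x)
      + (2 * S / r) * (2 * u₀ x - 1) * (deriv u₀ x) ^ 2 = 0)
    (h : ℝ → ℝ) (hh : ContDiff ℝ 2 h) (x : ℝ) :
    Lop S r u₀ h x = Real.exp (-(2 * S / r) * ((u₀ x) ^ 2 - u₀ x)) *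
      (deriv (deriv (fun y => h y * Real.exp ((2 * S / r) * ((u₀ y) ^ 2 - u₀ y)))) x
        + ((2 * S ^ 2 / r) * (2 * u₀ x - 1) * fpoly (u₀ x) + S * deriv fpoly (u₀ x)) *
          (h x * Real.exp ((2 * S / r) * ((u₀ x) ^ 2 - u₀ x)))) := by
  have hu₁ : Differentiable ℝ u₀ := hu.differentiable (by norm_num)
  have hφ : ContDiff ℝ 2 fun y => 2 * S / r * (u₀ y ^ 2 - u₀ y) := by fun_prop
  have hu₂ : deriv (deriv u₀) x =
      -(S * fpoly (u₀ x)) - 2 * S / r * (2 * u₀ x - 1) * deriv u₀ x ^ 2 := by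
    linarith [hode x]
  rw [deriv_deriv_mul_exp (hh.differentiable (by norm_num)) (hφ.differentiable (by norm_num))
      (hh.differentiable_deriv_two x) (hφ.differentiable_deriv_two x),
    deriv_deriv_mul_sq_sub _ hu₁ (hu.differentiable_deriv_two x), deriv_mul_sq_sub _ hu₁, hu₂]
  rw [neg_mul, ← mul_assoc _ (h x), ← add_mul, mul_left_comm, ← exp_add, neg_add_cancel, exp_zero,
    mul_one, Lop]
  ring
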